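/- Every connected compact metric n-manifold without boundary is homogeneous: for any two points x, y there is a homeomorphism of the space onto itself taking x to y. -/

import Mathlib

/-!
Fix a chart `φ : U ≃ₜ E` around `x`, centred at `x`. For `‖a‖ < 1` the map
`v ↦ v + max (1 - ‖v‖) 0 • a` is the identity perturbed by an `‖a‖`-Lipschitz map, hence a
homeomorphism of `E`; it sends `0` to `a` and fixes everything outside the unit ball. Transported
through `φ`, it is the identity off a compact subset of the open set `U`, so (the space being
Hausdorff) it extends by the identity to a homeomorphism of `X`. Thus every point can be moved
to every nearby point, i.e. the orbits of the homeomorphism group are open, and connectedness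
leaves only one orbit.
-/

/-- A space is homogeneous if for any two points there is a self-homeomorphism
taking one to the other. -/
def Homogeneous (X : Type*) [TopologicalSpace X] : Prop :=
  ∀ x y : X, ∃ h : X ≃ₜ X, h x = y

/-- `X` is an `n`-manifold (without boundary): each point has an open neighborhood
homeomorphic to Euclidean `n`-space. -/
def IsNManifold (X : Type*) [TopologicalSpace X] (n : ℕ) : Prop :=
  ∀ x : X, ∃ U : Set X, x ∈ U ∧ IsOpen U ∧ Nonempty (U ≃ₜ EuclideanSpace ℝ (Fin n))

open Set Filter Topology

theorem exists_homeomorph_map_zero_eq_of_norm_lt_one {E : Type*} [NormedAddCommGroup E]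
    [NormedSpace ℝ E] [CompleteSpace E] {a : E} (ha : ‖a‖ < 1) :
    ∃ h : E ≃ₜ E, h 0 = a ∧ ∀ x, 1 ≤ ‖x‖ → h x = x := by
  set bump : E → E := fun x ↦ max (1 - ‖x‖) 0 • a
  have hbump : LipschitzWith ‖a‖₊ bump := by
    have : LipschitzWith 1 fun x : E ↦ max (1 - ‖x‖) 0 := by
      simpa using ((IsometryEquiv.subLeft (1 : ℝ)).isometry.lipschitz.comp
        lipschitzWith_one_norm).max_const 0
    simpa [Function.comp_def] using (ContinuousLinearMap.toSpanSingleton ℝ a).lipschitz.comp this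
  have happrox : ApproximatesLinearOn (fun x ↦ x + bump x)
      (ContinuousLinearEquiv.refl ℝ E : E →L[ℝ] E) univ ‖a‖₊ := by
    refine LipschitzOnWith.approximatesLinearOn ?_
    convert hbump.lipschitzOnWith (s := univ) using 1
    ext x
    simp
  have hc : Subsingleton E ∨ ‖a‖₊ < ‖((ContinuousLinearEquiv.refl ℝ E).symm : E →L[ℝ] E)‖₊⁻¹ := by
    rcases subsingleton_or_nontrivial E with hE | hE
    · exact .inl hE
    · right
      simpa [← NNReal.coe_lt_coe] using ha
  refine ⟨happrox.toHomeomorph _ hc, ?_, fun x hx ↦ ?_⟩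
  · show 0 + bump 0 = a
    simp [bump]
  · show x + bump x = x
    simp [bump, hx]

theorem Equiv.Perm.continuous_ofSubtype {X : Type*} [TopologicalSpace X] [T2Space X]
    {U : Set X} [DecidablePred (· ∈ U)] (hU : IsOpen U) {f : Equiv.Perm U} (hf : Continuous f)
    {K : Set U} (hK : IsCompact K) (hfK : ∀ u ∉ K, f u = u) :
    Continuous (Equiv.Perm.ofSubtype f) := by
  have hKX : IsClosed (((↑) : U → X) '' K) := (hK.image continuous_subtype_val).isClosed
  refine continuous_iff_continuousAt.2 fun x ↦ ?_
  by_cases hx : x ∈ U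
  · have : ContinuousOn (Equiv.Perm.ofSubtype f) U := by
      rw [continuousOn_iff_continuous_domRestrict]
      convert continuous_subtype_val.comp hf using 1
      ext u
      exact Equiv.Perm.ofSubtype_apply_coe f u
    exact this.continuousAt (hU.mem_nhds hx)
  · have hxK : x ∈ (((↑) : U → X) '' K)ᶜ := fun ⟨u, _, hu⟩ ↦ hx (hu ▸ u.2)
    refine (continuousOn_id.congr fun z hz ↦ ?_).continuousAt (hKX.isOpen_compl.mem_nhds hxK)
    by_cases hzU : z ∈ U
    · rw [Equiv.Perm.ofSubtype_apply_of_mem f hzU, hfK _ fun hzK ↦ hz ⟨_, hzK, rfl⟩, id]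
    · exact Equiv.Perm.ofSubtype_apply_of_not_mem f hzU

theorem Homeomorph.exists_extend_of_isCompact {X : Type*} [TopologicalSpace X] [T2Space X]
    {U : Set X} (hU : IsOpen U) (e : U ≃ₜ U) {K : Set U} (hK : IsCompact K)
    (heK : ∀ u ∉ K, e u = u) : ∃ H : X ≃ₜ X, ∀ u : U, H u = e u := by
  classical
  have heK' : ∀ u ∉ K, e.symm u = u := fun u hu ↦ by
    rw [e.symm_apply_eq, heK u hu]
  refine ⟨⟨Equiv.Perm.ofSubtype e.toEquiv,
    Equiv.Perm.continuous_ofSubtype hU e.continuous hK heK, ?_⟩, fun u ↦ ?_⟩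
  · have := Equiv.Perm.continuous_ofSubtype (f := e.toEquiv⁻¹) hU e.symm.continuous hK heK'
    rwa [map_inv] at this
  · exact Equiv.Perm.ofSubtype_apply_coe _ u

theorem eventually_exists_homeomorph_apply_eq {X E : Type*} [TopologicalSpace X] [T2Space X]
    [NormedAddCommGroup E] [NormedSpace ℝ E] [ProperSpace E] {U : Set X} (hU : IsOpen U)
    (φ : U ≃ₜ E) {x : X} (hx : x ∈ U) : ∀ᶠ y in 𝓝 x, ∃ H : X ≃ₜ X, H x = y := by
  set x' : U := ⟨x, hx⟩
  set ψ : U ≃ₜ E := φ.trans (Homeomorph.addRight (-φ x'))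
  have hψx : ψ x' = 0 := by simp [ψ]
  have hreach : ∀ u : U, ‖ψ u‖ < 1 → ∃ H : X ≃ₜ X, H x = u := by
    intro u hu
    obtain ⟨h, h0, hfix⟩ := exists_homeomorph_map_zero_eq_of_norm_lt_one hu
    have hK : IsCompact (ψ ⁻¹' Metric.closedBall 0 1) :=
      ψ.isCompact_preimage.2 (isCompact_closedBall 0 1)
    obtain ⟨H, hH⟩ := Homeomorph.exists_extend_of_isCompact hU (ψ.trans (h.trans ψ.symm)) hK
      fun v hv ↦ by
        simp only [mem_preimage, mem_closedBall_zero_iff, not_le] at hv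
        simp [hfix (ψ v) hv.le]
    exact ⟨H, by simp [x', hH x', hψx, h0]⟩
  have hnear : ∀ᶠ u in 𝓝 x', ‖ψ u‖ < 1 :=
    ψ.continuous.norm.continuousAt.eventually_lt continuousAt_const (by simp [hψx])
  rw [← hU.isOpenEmbedding_subtypeVal.map_nhds_eq x', eventually_map]
  exact hnear.mono hreach

theorem homogeneous_of_eventually_exists_homeomorph_apply_eq {X : Type*} [TopologicalSpace X]
    [PreconnectedSpace X] (h : ∀ x : X, ∀ᶠ y in 𝓝 x, ∃ H : X ≃ₜ X, H x = y) : Homogeneous X :=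
  PreconnectedSpace.induction₂' (fun x y ↦ ∃ H : X ≃ₜ X, H x = y)
    (fun x ↦ (h x).mono fun _ ⟨H, hH⟩ ↦ ⟨⟨H, hH⟩, H.symm, by simp [← hH]⟩)
    ⟨fun _ _ _ ⟨g, hg⟩ ⟨H, hH⟩ ↦ ⟨g.trans H, by simp [hg, hH]⟩⟩

theorem homogeneous_of_connected_compact_manifold_general (X : Type*) [MetricSpace X]
    [ConnectedSpace X]
    (n : ℕ) (hX : IsNManifold X n) : Homogeneous X := by
  refine homogeneous_of_eventually_exists_homeomorph_apply_eq fun x ↦ ?_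
  obtain ⟨U, hxU, hU, ⟨φ⟩⟩ := hX x
  exact eventually_exists_homeomorph_apply_eq hU φ hxU

/-- Every connected compact metric `n`-manifold without boundary is homogeneous. -/
theorem homogeneous_of_connected_compact_manifold (X : Type*) [MetricSpace X]
    [TopologicalSpace.SeparableSpace X] [CompactSpace X] [ConnectedSpace X]
    (n : ℕ) (hX : IsNManifold X n) : Homogeneous X :=
  homogeneous_of_connected_compact_manifold_general X n hX
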